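/- For every nonempty word α over 𝒜, the set of formulas derivable from P_T ∪ ͞α equals P_T* ∪ T_α*: a formula is derivable from P_T together with the code of α (by modus ponens and substitution) if and only if it is a substitution instance of an axiom of P_T or a substitution instance of a formula in T_α. -/
import Mathlib


namespace PC

/-- `{→}`-formulas over a countably infinite set of propositional variables. -/
inductive Fml : Type where
  | var : ℕ → Fml
  | imp : Fml → Fml → Fml
deriving DecidableEq

namespace Fml

/-- Application of a substitution to a formula. -/
def subst (σ : ℕ → Fml) : Fml → Fml
  | var n => σ n
  | imp A B => imp (subst σ A) (subst σ B)

/-- The set of variables of a formula. -/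
def fvars : Fml → Finset ℕ
  | var n => {n}
  | imp A B => fvars A ∪ fvars B

/-- Derivability from a set of axioms by modus ponens and substitution. -/
inductive Deriv (P : Set Fml) : Fml → Prop
  | ax {A : Fml} : A ∈ P → Deriv P A
  | mp {A B : Fml} : Deriv P A → Deriv P (imp A B) → Deriv P B
  | sub {A : Fml} (σ : ℕ → Fml) : Deriv P A → Deriv P (subst σ A)

end Fml

/-- `B̂`: the result of substituting `B` for the variable `x` (= `var 0`) in `x̂`. -/
def hat (xhat B : Fml) : Fml := Fml.subst (fun n => if n = 0 then B else Fml.var n) xhat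

/-- `A ∘ B := ((B̂ → B̂) → B̂) → (Â → ((B̂ → B̂) → B̂))`. -/
def circ (xhat A B : Fml) : Fml :=
  .imp (.imp (.imp (hat xhat B) (hat xhat B)) (hat xhat B))
    (.imp (hat xhat A) (.imp (.imp (hat xhat B) (hat xhat B)) (hat xhat B)))

/-- `A · B := ((A → A) → A) ∘ B`. -/
def dot (xhat A B : Fml) : Fml := circ xhat (.imp (.imp A A) A) B

/-- `Cform i` is the formula `p → (p → … (p → p))` with `i` antecedents `p`,
where `p := var 0`. -/
def Cform : ℕ → Fml
  | 0 => .var 0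
  | n + 1 => .imp (.var 0) (Cform n)

/-- The code of the letter `aᵢ` (letters of the alphabet `𝒜 = {a₁, …, a_m}` are the
elements of `Fin m`, the letter `a : Fin m` standing for `a_{a+1}`): `Cᵢ ∘ p`. -/
def letterCode (xhat : Fml) {m : ℕ} (a : Fin m) : Fml :=
  circ xhat (Cform (a.val + 1)) (.var 0)

/-- Formal alphabetic-formula trees over the alphabet `Fin m`. -/
inductive ATree (m : ℕ) : Type where
  | leaf : Fin m → ATree m
  | node : ATree m → ATree m → ATree m

/-- The word associated with an alphabetic formula. -/
def ATree.word {m : ℕ} : ATree m → List (Fin m)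
  | .leaf a => [a]
  | .node l r => l.word ++ r.word

/-- The `{→}`-formula denoted by an alphabetic-formula tree. -/
def ATree.toFml {m : ℕ} (xhat : Fml) : ATree m → Fml
  | .leaf a => letterCode xhat a
  | .node l r => dot xhat (l.toFml xhat) (r.toFml xhat)

/-- `A` is an alphabetic formula (an `𝒜`-formula). -/
def IsAForm (m : ℕ) (xhat : Fml) (A : Fml) : Prop := ∃ t : ATree m, t.toFml xhat = A

/-- The code `͞α` of a word `α`: the set of all `𝒜`-formulas `A` with `word(A) = α`. -/
def codeSet {m : ℕ} (xhat : Fml) (α : List (Fin m)) : Set Fml :=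
  { A | ∃ t : ATree m, t.word = α ∧ t.toFml xhat = A }

/-- `A*`: the set of substitution instances of `A`. -/
def Inst (A : Fml) : Set Fml := { B | ∃ σ, Fml.subst σ A = B }

/-- `M*`: the set of substitution instances of members of `M`. -/
def InstSet (M : Set Fml) : Set Fml := { B | ∃ A ∈ M, ∃ σ, Fml.subst σ A = B }

/-- A tag system over the alphabet `Fin m`: the words `ω₁, …, ω_m` and the
deletion number `d`. -/
structure TagSystem (m : ℕ) where
  W : Fin m → List (Fin m)
  d : ℕ

/-- One-step production: `ξ ↦_T ζ` iff `ξ = aᵢβγ` with `|β| = d − 1` and `ζ = γωᵢ`. -/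
def TagStep {m : ℕ} (T : TagSystem m) (ξ ζ : List (Fin m)) : Prop :=
  ∃ (i : Fin m) (β γ : List (Fin m)),
    β.length = T.d - 1 ∧ ξ = i :: (β ++ γ) ∧ ζ = γ ++ T.W i

/-- `ξ ⟾_T ζ`: reflexive-transitive closure of one-step production. -/
def TagProd {m : ℕ} (T : TagSystem m) : List (Fin m) → List (Fin m) → Prop :=
  Relation.ReflTransGen (TagStep T)

/-- `T` halts on `ξ`. -/
def TagHalts {m : ℕ} (T : TagSystem m) (ξ : List (Fin m)) : Prop :=
  ∃ ζ, TagProd T ξ ζ ∧ ζ.length < T.d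

/-- The variables `x, y, z, u` used in the axiom schemes. -/
def Xv : Fml := .var 1
def Yv : Fml := .var 2
def Zv : Fml := .var 3
def Uv : Fml := .var 4

/-- The axioms (R₁)–(R₄). -/
def Raxioms (xhat : Fml) : Set Fml :=
  { .imp (dot xhat Xv (dot xhat Yv Zv)) (dot xhat (dot xhat Xv Yv) Zv),
    .imp (dot xhat (dot xhat Xv Yv) Zv) (dot xhat Xv (dot xhat Yv Zv)),
    .imp (dot xhat (dot xhat Xv (dot xhat Yv Zv)) Uv)
      (dot xhat (dot xhat (dot xhat Xv Yv) Zv) Uv),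
    .imp (dot xhat (dot xhat (dot xhat Xv Yv) Zv) Uv)
      (dot xhat (dot xhat Xv (dot xhat Yv Zv)) Uv) }

/-- The axioms (T₁) and (T₂) of `P_T`. -/
def Taxioms {m : ℕ} (xhat : Fml) (T : TagSystem m) : Set Fml :=
  { F | ∃ (i : Fin m) (α : List (Fin m)) (A B : Fml),
      α.length = T.d - 1 ∧ A ∈ codeSet xhat (i :: α) ∧ B ∈ codeSet xhat (T.W i) ∧
      (F = .imp (dot xhat A Xv) (dot xhat Xv B) ∨ F = .imp A B) }

/-- The calculus `P_T`. -/
def PT {m : ℕ} (xhat : Fml) (T : TagSystem m) : Set Fml := Taxioms xhat T ∪ Raxioms xhat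

/-- `P ⊢ A ⇒ B`: there are `C₀ = A, …, C_n = B` with `P ⊢ Cᵢ → Cᵢ₊₁` for all `i`. -/
def DChain (P : Set Fml) : Fml → Fml → Prop :=
  Relation.ReflTransGen (fun C D => Fml.Deriv P (.imp C D))

/-- `T_α`: the set of `𝒜`-formulas `A` with `α ⟾_T word(A)`. -/
def Tset {m : ℕ} (xhat : Fml) (T : TagSystem m) (α : List (Fin m)) : Set Fml :=
  { A | ∃ t : ATree m, t.toFml xhat = A ∧ TagProd T α t.word }

/-- The halting-condition axioms (H) for the calculus `P₀`. -/
def Haxioms {m : ℕ} (xhat : Fml) (T : TagSystem m) (P₀ : Finset Fml) : Set Fml :=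
  { F | ∃ (α : List (Fin m)) (A B : Fml), α ≠ [] ∧ α.length < T.d ∧
      A ∈ codeSet xhat α ∧ B ∈ P₀ ∧ F = .imp A B }

/-- The calculus `P_{T,P₀}`. -/
def PTP0 {m : ℕ} (xhat : Fml) (T : TagSystem m) (P₀ : Finset Fml) : Set Fml :=
  PT xhat T ∪ Haxioms xhat T P₀

/-- The calculus `P_{T,P₀,ξ}`. -/
def PTP0xi {m : ℕ} (xhat : Fml) (T : TagSystem m) (P₀ : Finset Fml)
    (ξ : List (Fin m)) : Set Fml :=
  PT xhat T ∪ Haxioms xhat T P₀ ∪ codeSet xhat ξ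

/-- `⟨P⟩`: formulas obtained from `P` by one application of modus ponens or
substitution. -/
def stepOnce (P : Set Fml) : Set Fml :=
  { B | ∃ A, A ∈ P ∧ Fml.imp A B ∈ P } ∪ { B | ∃ A ∈ P, ∃ σ, Fml.subst σ A = B }

/-- `⟨P⟩_n`. -/
def stepIter (P : Set Fml) : ℕ → Set Fml
  | 0 => P
  | n + 1 => stepOnce (stepIter P n)

/-- The single axiom `x → (y → x)`. -/
def Kax : Fml := .imp (.var 0) (.imp (.var 1) (.var 0))

/-- An effective encoding of `{→}`-formulas as natural numbers. -/
def encFml : Fml → ℕ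
  | .var n => Nat.pair 0 n
  | .imp A B => Nat.pair 1 (Nat.pair (encFml A) (encFml B))

/-- The fixed effective encoding of `{→}`-calculi (finite sets of formulas)
as natural numbers. -/
def encCalc (P : Finset Fml) : ℕ :=
  Encodable.encode ((P.image encFml).sort (· ≤ ·))


/-! ### Auxiliary development -/

namespace Aux

open Fml

theorem subst_comp (σ τ : ℕ → Fml) (F : Fml) :
    Fml.subst σ (Fml.subst τ F) = Fml.subst (fun n => Fml.subst σ (τ n)) F := by
  induction F with
  | var n => rfl
  | imp A B ihA ihB => simp [Fml.subst, ihA, ihB]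

theorem subst_congr {σ τ : ℕ → Fml} {F : Fml} (h : ∀ n ∈ F.fvars, σ n = τ n) :
    Fml.subst σ F = Fml.subst τ F := by
  induction F with
  | var n => exact h n (by simp [Fml.fvars])
  | imp A B ihA ihB =>
      simp only [Fml.fvars, Finset.mem_union] at h
      simp [Fml.subst, ihA (fun n hn => h n (Or.inl hn)), ihB (fun n hn => h n (Or.inr hn))]

theorem subst_var (F : Fml) : Fml.subst Fml.var F = F := by
  induction F with
  | var n => rfl
  | imp A B ihA ihB => simp [Fml.subst, ihA, ihB]

theorem fvars_subst_sub {σ : ℕ → Fml} {F : Fml} {S : Finset ℕ}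
    (h : ∀ n ∈ F.fvars, (σ n).fvars ⊆ S) : (Fml.subst σ F).fvars ⊆ S := by
  induction F with
  | var n => exact h n (by simp [Fml.fvars])
  | imp A B ihA ihB =>
      simp only [Fml.fvars, Finset.mem_union] at h ⊢
      refine Finset.union_subset ?_ ?_
      · exact ihA (fun n hn => h n (Or.inl hn))
      · exact ihB (fun n hn => h n (Or.inr hn))

/-- Size of a formula. -/
def sz : Fml → ℕ
  | .var _ => 1
  | .imp A B => sz A + sz B + 1

theorem sz_var (n : ℕ) : sz (.var n) = 1 := rfl
theorem sz_imp (A B : Fml) : sz (.imp A B) = sz A + sz B + 1 := rfl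

theorem sz_pos (F : Fml) : 0 < sz F := by
  cases F
  · simp [sz_var]
  · simp [sz_imp]

theorem ne_imp_self_l (A B : Fml) : A ≠ Fml.imp A B := by
  intro h
  have h1 := congrArg sz h
  have h2 := sz_pos B
  simp only [sz_imp] at h1
  omega

theorem ne_imp_self_r (A B : Fml) : A ≠ Fml.imp B A := by
  intro h
  have h1 := congrArg sz h
  have h2 := sz_pos B
  simp only [sz_imp] at h1
  omega

theorem ne_imp_imp (P X : Fml) : P ≠ Fml.imp (Fml.imp P P) X := by
  intro h
  have h1 := congrArg sz h
  have h2 := sz_pos X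
  simp only [sz_imp] at h1
  omega

section Trees

variable {m : ℕ}

/-- Elementary rebracketing steps licensed by the axioms (R₁)–(R₄). -/
inductive Rot : ATree m → ATree m → Prop
  | root1 (x y z : ATree m) :
      Rot (.node x (.node y z)) (.node (.node x y) z)
  | root2 (x y z : ATree m) :
      Rot (.node (.node x y) z) (.node x (.node y z))
  | left1 (x y z u : ATree m) :
      Rot (.node (.node x (.node y z)) u) (.node (.node (.node x y) z) u)
  | left2 (x y z u : ATree m) :
      Rot (.node (.node (.node x y) z) u) (.node (.node x (.node y z)) u)

theorem Rot.word_eq {s t : ATree m} (h : Rot s t) : s.word = t.word := by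
  cases h <;> simp [ATree.word, List.append_assoc]

theorem Rot.symm {s t : ATree m} (h : Rot s t) : Rot t s := by
  cases h with
  | root1 x y z => exact Rot.root2 x y z
  | root2 x y z => exact Rot.root1 x y z
  | left1 x y z u => exact Rot.left2 x y z u
  | left2 x y z u => exact Rot.left1 x y z u

theorem rotstar_symm {s t : ATree m} (h : Relation.ReflTransGen (Rot (m := m)) s t) :
    Relation.ReflTransGen (Rot (m := m)) t s := by
  induction h with
  | refl => exact .refl
  | tail _ hstep ih => exact .head hstep.symm ih

theorem word_ne_nil (t : ATree m) : t.word ≠ [] := by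
  induction t with
  | leaf a => simp [ATree.word]
  | node l r ihl ihr => simp [ATree.word, ihl, ihr]

/-- Right comb with leaves `a :: l`. -/
def rcomb : Fin m → List (Fin m) → ATree m
  | a, [] => .leaf a
  | a, b :: l => .node (.leaf a) (rcomb b l)

theorem rcomb_word : ∀ (a : Fin m) (l : List (Fin m)), (rcomb a l).word = a :: l
  | a, [] => rfl
  | a, b :: l => by simp [rcomb, ATree.word, rcomb_word b l]

/-- Flattening the right spine at the root. -/
theorem rot_L0 (r : ATree m) : ∀ l : ATree m, ∃ (l₂ : ATree m) (c : Fin m),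
    Relation.ReflTransGen (Rot (m := m)) (.node l r) (.node l₂ (.leaf c)) ∧
      l₂.word ++ [c] = l.word ++ r.word := by
  induction r with
  | leaf c => intro l; exact ⟨l, c, .refl, rfl⟩
  | node r1 r2 ih1 ih2 =>
      intro l
      obtain ⟨l₂, c, hstar, hword⟩ := ih2 (ATree.node l r1)
      refine ⟨l₂, c, .head (Rot.root1 l r1 r2) hstar, ?_⟩
      rw [hword]
      simp [ATree.word, List.append_assoc]

/-- Flattening the right spine of the left child. -/
theorem rot_L1 (q : ATree m) : ∀ (p u : ATree m), ∃ (p₂ : ATree m) (c : Fin m),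
    Relation.ReflTransGen (Rot (m := m)) (.node (.node p q) u) (.node (.node p₂ (.leaf c)) u) ∧
      p₂.word ++ [c] = p.word ++ q.word := by
  induction q with
  | leaf c => intro p u; exact ⟨p, c, .refl, rfl⟩
  | node q1 q2 ih1 ih2 =>
      intro p u
      obtain ⟨p₂, c, hstar, hword⟩ := ih2 (ATree.node p q1) u
      refine ⟨p₂, c, .head (Rot.left1 p q1 q2 u) hstar, ?_⟩
      rw [hword]
      simp [ATree.word, List.append_assoc]

/-- Merging a tree into a right comb. -/
theorem rot_M : ∀ (k : ℕ) (l : ATree m), l.word.length ≤ k →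
    ∀ (c : Fin m) (w : List (Fin m)), ∃ (a : Fin m) (w' : List (Fin m)),
      l.word = a :: w' ∧
      Relation.ReflTransGen (Rot (m := m)) (.node l (rcomb c w)) (rcomb a (w' ++ c :: w)) := by
  intro k
  induction k with
  | zero =>
      intro l hlen
      exfalso
      have := word_ne_nil l
      cases hsw : l.word with
      | nil => exact this hsw
      | cons a w => rw [hsw] at hlen; simp at hlen
  | succ k ih =>
      intro l hlen c w
      cases l with
      | leaf a => exact ⟨a, [], rfl, by simp only [List.nil_append]; exact .refl⟩
      | node p q =>
          obtain ⟨p₂, c₂, hstar, hword⟩ := rot_L1 q p (rcomb c w)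
          have hlen2 : p₂.word.length ≤ k := by
            have h1 := congrArg List.length hword
            simp only [List.length_append, List.length_cons, List.length_nil] at h1
            simp only [ATree.word, List.length_append] at hlen
            have := word_ne_nil q
            have hq : 0 < q.word.length := List.length_pos_iff.mpr this
            omega
          obtain ⟨a, w', hw', hstar2⟩ := ih p₂ hlen2 c₂ (c :: w)
          have hstep : Rot (m := m) (.node (.node p₂ (.leaf c₂)) (rcomb c w))
              (.node p₂ (rcomb c₂ (c :: w))) := by
            show Rot (.node (.node p₂ (.leaf c₂)) (rcomb c w))
              (.node p₂ (.node (.leaf c₂) (rcomb c w)))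
            exact Rot.root2 p₂ (.leaf c₂) (rcomb c w)
          refine ⟨a, w' ++ [c₂], ?_, ?_⟩
          · show (ATree.node p q).word = a :: (w' ++ [c₂])
            have : (ATree.node p q).word = p₂.word ++ [c₂] := by
              simp [ATree.word, hword]
            rw [this, hw']
            simp
          · have hfin : rcomb a ((w' ++ [c₂]) ++ c :: w) = rcomb a (w' ++ c₂ :: c :: w) := by
              rw [List.append_assoc]
              rfl
            rw [hfin]
            exact hstar.trans ((Relation.ReflTransGen.single hstep).trans hstar2)

theorem rot_toRC (t : ATree m) (a : Fin m) (w : List (Fin m)) (hw : t.word = a :: w) :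
    Relation.ReflTransGen (Rot (m := m)) t (rcomb a w) := by
  cases t with
  | leaf b =>
      simp only [ATree.word] at hw
      injection hw with h1 h2
      subst h1; subst h2
      exact .refl
  | node l r =>
      obtain ⟨l₂, c, hstar, hword⟩ := rot_L0 r l
      obtain ⟨a', w', hw', hstar2⟩ := rot_M l₂.word.length l₂ le_rfl c []
      have hkey : a :: w = a' :: (w' ++ [c]) := by
        have h1 : (ATree.node l r).word = l₂.word ++ [c] := by
          simp [ATree.word, hword]
        rw [hw] at h1
        rw [h1, hw']
        simp
      injection hkey with e1 e2
      subst e1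
      rw [e2]
      have : (ATree.leaf c : ATree m) = rcomb c [] := rfl
      rw [this] at hstar
      refine hstar.trans ?_
      have : w' ++ c :: ([] : List (Fin m)) = w' ++ [c] := rfl
      rw [this] at hstar2
      exact hstar2

theorem rot_rebracket (s t : ATree m) (h : s.word = t.word) :
    Relation.ReflTransGen (Rot (m := m)) s t := by
  obtain ⟨a, w, hw⟩ : ∃ a w, s.word = a :: w := by
    cases hsw : s.word with
    | nil => exact absurd hsw (word_ne_nil s)
    | cons a w => exact ⟨a, w, rfl⟩
  exact (rot_toRC s a w hw).trans (rotstar_symm (rot_toRC t a w (h ▸ hw)))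

end Trees

section Hat

variable {xhat : Fml} (hx : xhat.fvars = {0})
include hx

theorem zero_mem_xhat : 0 ∈ xhat.fvars := by rw [hx]; simp

theorem subst_hat (σ : ℕ → Fml) (B : Fml) :
    Fml.subst σ (hat xhat B) = hat xhat (Fml.subst σ B) := by
  unfold hat
  rw [subst_comp]
  refine subst_congr ?_
  intro n hn
  rw [hx] at hn
  simp only [Finset.mem_singleton] at hn
  subst hn
  simp

omit hx in
theorem hat_inj_aux {B C : Fml} :
    ∀ F : Fml, 0 ∈ F.fvars →
      Fml.subst (fun n => if n = 0 then B else Fml.var n) F =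
      Fml.subst (fun n => if n = 0 then C else Fml.var n) F → B = C := by
  intro F
  induction F with
  | var n =>
      intro hn h
      simp [Fml.fvars] at hn
      subst hn
      simpa [Fml.subst] using h
  | imp A B' ihA ihB =>
      intro hn h
      simp only [Fml.fvars, Finset.mem_union] at hn
      simp only [Fml.subst, Fml.imp.injEq] at h
      rcases hn with hn | hn
      · exact ihA hn h.1
      · exact ihB hn h.2

theorem hat_inj {B C : Fml} (h : hat xhat B = hat xhat C) : B = C :=
  hat_inj_aux xhat (zero_mem_xhat hx) h

theorem fvars_hat_sub {B : Fml} (hB : B.fvars ⊆ {0}) : (hat xhat B).fvars ⊆ {0} := by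
  unfold hat
  refine fvars_subst_sub ?_
  intro n hn
  rw [hx] at hn
  simp only [Finset.mem_singleton] at hn
  subst hn
  simpa using hB

/-- `⟨B⟩ = (B̂ → B̂) → B̂`. -/
def ang (xhat B : Fml) : Fml :=
  .imp (.imp (hat xhat B) (hat xhat B)) (hat xhat B)

omit hx in
theorem circ_eq (xhat A B : Fml) :
    circ xhat A B = .imp (ang xhat B) (.imp (hat xhat A) (ang xhat B)) := rfl

omit hx in
theorem dot_eq (xhat A B : Fml) :
    dot xhat A B =
      .imp (ang xhat B) (.imp (hat xhat (.imp (.imp A A) A)) (ang xhat B)) := rfl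

/-- `chain v n` is `v → (v → … → v)` with `n` antecedents. -/
def chain (v : Fml) : ℕ → Fml
  | 0 => v
  | n + 1 => .imp v (chain v n)

omit hx in
theorem subst_Cform (σ : ℕ → Fml) : ∀ n, Fml.subst σ (Cform n) = chain (σ 0) n
  | 0 => rfl
  | n + 1 => by simp [Cform, Fml.subst, chain, subst_Cform σ n]

omit hx in
theorem chain_inj_same {v : Fml} : ∀ {a b : ℕ}, chain v a = chain v b → a = b := by
  intro a
  induction a with
  | zero =>
      intro b h
      cases b with
      | zero => rfl
      | succ b => exact absurd h (ne_imp_self_l v (chain v b))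
  | succ a ih =>
      intro b h
      cases b with
      | zero => exact absurd h.symm (ne_imp_self_l v (chain v a))
      | succ b =>
          simp only [chain, Fml.imp.injEq] at h
          exact congrArg (· + 1) (ih h.2)

omit hx in
theorem fvars_Cform : ∀ n, (Cform n).fvars ⊆ {0}
  | 0 => by simp [Cform, Fml.fvars]
  | n + 1 => by
      simp only [Cform, Fml.fvars]
      exact Finset.union_subset (by simp [Fml.fvars]) (fvars_Cform n)

theorem subst_ang (σ : ℕ → Fml) (B : Fml) :
    Fml.subst σ (ang xhat B) = ang xhat (Fml.subst σ B) := by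
  simp [ang, Fml.subst, subst_hat hx]

theorem subst_dot (σ : ℕ → Fml) (A B : Fml) :
    Fml.subst σ (dot xhat A B) = dot xhat (Fml.subst σ A) (Fml.subst σ B) := by
  simp [dot, circ, Fml.subst, subst_hat hx]

theorem ang_inj {B C : Fml} (h : ang xhat B = ang xhat C) : B = C := by
  simp only [ang, Fml.imp.injEq] at h
  exact hat_inj hx h.2

theorem fvars_ang_sub {B : Fml} (hB : B.fvars ⊆ {0}) : (ang xhat B).fvars ⊆ {0} := by
  simp only [ang, Fml.fvars]
  have h := fvars_hat_sub hx hB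
  exact Finset.union_subset (Finset.union_subset h h) h

theorem fvars_dot_sub {A B : Fml} (hA : A.fvars ⊆ {0}) (hB : B.fvars ⊆ {0}) :
    (dot xhat A B).fvars ⊆ {0} := by
  simp only [dot, circ, Fml.fvars]
  have hB' := fvars_hat_sub hx hB
  have hA' : (Fml.imp (Fml.imp A A) A).fvars ⊆ {0} := by
    simp only [Fml.fvars]
    exact Finset.union_subset (Finset.union_subset hA hA) hA
  have hA'' := fvars_hat_sub hx hA'
  refine Finset.union_subset (Finset.union_subset (Finset.union_subset hB' hB') hB') ?_
  exact Finset.union_subset hA''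
    (Finset.union_subset (Finset.union_subset hB' hB') hB')

theorem fvars_toFml {m : ℕ} : ∀ t : ATree m, (t.toFml xhat).fvars ⊆ {0}
  | .leaf a => by
      simp only [ATree.toFml, letterCode]
      rw [circ_eq]
      have h1 : ((Fml.var 0) : Fml).fvars ⊆ {0} := by simp [Fml.fvars]
      have h2 := fvars_ang_sub hx h1
      have h3 := fvars_hat_sub hx (fvars_Cform (a.val + 1))
      simp only [Fml.fvars]
      exact Finset.union_subset h2 (Finset.union_subset h3 h2)
  | .node l r => by
      simp only [ATree.toFml]
      exact fvars_dot_sub hx (fvars_toFml l) (fvars_toFml r)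

theorem subst_toFml_fix {m : ℕ} {σ τ : ℕ → Fml} (h : σ 0 = τ 0) (t : ATree m) :
    Fml.subst σ (t.toFml xhat) = Fml.subst τ (t.toFml xhat) := by
  refine subst_congr ?_
  intro n hn
  have := fvars_toFml hx t hn
  simp only [Finset.mem_singleton] at this
  subst this
  exact h

theorem subst_toFml_id {m : ℕ} {σ : ℕ → Fml} (h : σ 0 = Fml.var 0) (t : ATree m) :
    Fml.subst σ (t.toFml xhat) = t.toFml xhat := by
  rw [subst_toFml_fix hx h t, subst_var]

theorem subst_leaf {m : ℕ} (σ : ℕ → Fml) (a : Fin m) :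
    Fml.subst σ ((ATree.leaf a).toFml xhat) =
      .imp (ang xhat (σ 0))
        (.imp (hat xhat (chain (σ 0) (a.val + 1))) (ang xhat (σ 0))) := by
  show Fml.subst σ (circ xhat (Cform (a.val + 1)) (.var 0)) = _
  rw [circ_eq]
  simp [Fml.subst, subst_ang hx, subst_hat hx, subst_Cform, ang, chain]

theorem subst_node {m : ℕ} (σ : ℕ → Fml) (l r : ATree m) :
    Fml.subst σ ((ATree.node l r).toFml xhat) =
      .imp (ang xhat (Fml.subst σ (r.toFml xhat)))
        (.imp (hat xhat (.imp (.imp (Fml.subst σ (l.toFml xhat))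
            (Fml.subst σ (l.toFml xhat))) (Fml.subst σ (l.toFml xhat))))
          (ang xhat (Fml.subst σ (r.toFml xhat)))) := by
  show Fml.subst σ (dot xhat (l.toFml xhat) (r.toFml xhat)) = _
  rw [subst_dot hx, dot_eq]

/-- Every instance of an alphabetic formula has the "dot shape"
`(ang Z) → (hat M → ang Z)`. -/
theorem inst_shape {m : ℕ} (t : ATree m) (σ : ℕ → Fml) :
    ∃ Z M, Fml.subst σ (t.toFml xhat) =
      .imp (ang xhat Z) (.imp (hat xhat M) (ang xhat Z)) := by
  cases t with
  | leaf a => exact ⟨σ 0, chain (σ 0) (a.val + 1), subst_leaf hx σ a⟩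
  | node l r =>
      exact ⟨Fml.subst σ (r.toFml xhat), _, subst_node hx σ l r⟩

omit hx in
theorem dotshape_ne_ang {Z W : Fml} (M : Fml) :
    ang xhat W ≠ Fml.imp (ang xhat Z) (Fml.imp M (ang xhat Z)) := by
  intro h
  simp only [ang, Fml.imp.injEq] at h
  obtain ⟨⟨h1, h2⟩, -⟩ := h
  rw [h2] at h1
  exact ne_imp_self_l _ _ h1

theorem leaf_node_ne {m : ℕ} (a : Fin m) (p q : ATree m) (σ τ : ℕ → Fml) :
    Fml.subst σ ((ATree.leaf a).toFml xhat) ≠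
      Fml.subst τ ((ATree.node p q).toFml xhat) := by
  intro h
  rw [subst_leaf hx, subst_node hx] at h
  simp only [Fml.imp.injEq] at h
  obtain ⟨h1, h2, -⟩ := h
  have h0 := ang_inj hx h1
  have hc := hat_inj hx h2
  simp only [chain] at hc
  injection hc with hc1 hc2
  obtain ⟨Z, M, hq⟩ := inst_shape hx q τ
  rw [h0, hq] at hc1
  injection hc1 with e1 e2
  rw [← e1] at e2
  exact ne_imp_self_r (ang xhat Z) (hat xhat M) e2.symm

theorem treeinst_eq {m : ℕ} :
    ∀ (t s : ATree m) (σ τ : ℕ → Fml),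
      Fml.subst σ (t.toFml xhat) = Fml.subst τ (s.toFml xhat) →
      t.word = s.word ∧ σ 0 = τ 0 := by
  intro t
  induction t with
  | leaf a =>
      intro s σ τ h
      cases s with
      | leaf b =>
          rw [subst_leaf hx, subst_leaf hx] at h
          simp only [Fml.imp.injEq] at h
          obtain ⟨h1, h2, -⟩ := h
          have h0 := ang_inj hx h1
          have hc := hat_inj hx h2
          rw [h0] at hc
          have hab := chain_inj_same hc
          have : a = b := Fin.ext (by omega)
          exact ⟨by rw [this], h0⟩
      | node p q => exact absurd h (leaf_node_ne hx a p q σ τ)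
  | node l r ihl ihr =>
      intro s σ τ h
      cases s with
      | leaf b => exact absurd h.symm (leaf_node_ne hx b l r τ σ)
      | node p q =>
          rw [subst_node hx, subst_node hx] at h
          simp only [Fml.imp.injEq] at h
          obtain ⟨h1, h2, -⟩ := h
          have hq := ang_inj hx h1
          have hl := hat_inj hx h2
          simp only [Fml.imp.injEq] at hl
          obtain ⟨hw1, -⟩ := ihl p σ τ hl.2
          obtain ⟨hw2, h0⟩ := ihr q σ τ hq
          exact ⟨by simp [ATree.word, hw1, hw2], h0⟩

theorem dot_inst {m : ℕ} {P Q : Fml} {t : ATree m} {σ : ℕ → Fml}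
    (h : dot xhat P Q = Fml.subst σ (t.toFml xhat)) :
    ∃ l r, t = ATree.node l r ∧ P = Fml.subst σ (l.toFml xhat) ∧
      Q = Fml.subst σ (r.toFml xhat) := by
  cases t with
  | leaf a =>
      exfalso
      rw [subst_leaf hx, dot_eq] at h
      simp only [Fml.imp.injEq] at h
      obtain ⟨h1, h2, -⟩ := h
      have hc := hat_inj hx h2
      simp only [chain] at hc
      injection hc with e1 e2
      cases hv : a.val with
      | zero =>
          rw [hv] at e2
          simp only [chain] at e2
          rw [← e2] at e1
          exact ne_imp_self_l P P e1.symm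
      | succ k =>
          rw [hv] at e2
          simp only [chain] at e2
          rw [← e1] at e2
          exact ne_imp_imp P _ e2
  | node l r =>
      rw [subst_node hx, dot_eq] at h
      simp only [Fml.imp.injEq] at h
      obtain ⟨h1, h2, -⟩ := h
      have hQ := ang_inj hx h1
      have hP := hat_inj hx h2
      simp only [Fml.imp.injEq] at hP
      exact ⟨l, r, rfl, hP.2, hQ⟩

omit hx in
theorem subst_Xv (σ : ℕ → Fml) : Fml.subst σ Xv = σ 1 := rfl
omit hx in
theorem subst_Yv (σ : ℕ → Fml) : Fml.subst σ Yv = σ 2 := rfl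
omit hx in
theorem subst_Zv (σ : ℕ → Fml) : Fml.subst σ Zv = σ 3 := rfl
omit hx in
theorem subst_Uv (σ : ℕ → Fml) : Fml.subst σ Uv = σ 4 := rfl

section Calc

variable {m : ℕ} {T : TagSystem m}

theorem axinst_antecedent {F : Fml} (hF : F ∈ PT xhat T) :
    ∃ C D, F = .imp C D ∧
      ∀ σ, ∃ Z M, Fml.subst σ C = .imp (ang xhat Z) (.imp M (ang xhat Z)) := by
  rcases hF with hF | hF
  · obtain ⟨i, α', A, B, hlen, ⟨tA, hwA, hA⟩, ⟨tB, hwB, hB⟩, hor⟩ := hF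
    rcases hor with rfl | rfl
    · refine ⟨_, _, rfl, fun σ => ?_⟩
      exact ⟨Fml.subst σ Xv, _, by rw [subst_dot hx, dot_eq]⟩
    · refine ⟨A, B, rfl, fun σ => ?_⟩
      subst hA
      obtain ⟨Z, M, hZ⟩ := inst_shape hx tA σ
      exact ⟨Z, hat xhat M, hZ⟩
  · simp only [Raxioms, Set.mem_insert_iff, Set.mem_singleton_iff] at hF
    rcases hF with rfl | rfl | rfl | rfl <;>
      exact ⟨_, _, rfl, fun σ => ⟨_, _, by rw [subst_dot hx, dot_eq]⟩⟩

theorem ang_notin_instPT {X : Fml} : ang xhat X ∉ InstSet (PT xhat T) := by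
  rintro ⟨F, hF, σ, hσ⟩
  obtain ⟨C, D, rfl, hC⟩ := axinst_antecedent hx hF
  obtain ⟨Z, M, hZ⟩ := hC σ
  simp only [Fml.subst] at hσ
  rw [hZ] at hσ
  have : ang xhat X = Fml.imp (Fml.imp (hat xhat X) (hat xhat X)) (hat xhat X) := rfl
  rw [this] at hσ
  injection hσ with h1 h2
  injection h1 with e1 e2
  rw [← e1] at e2
  exact ne_imp_self_r (ang xhat Z) M e2.symm

theorem treeinst_ne_ang {X : Fml} (t : ATree m) (σ : ℕ → Fml) :
    Fml.subst σ (t.toFml xhat) ≠ ang xhat X := by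
  obtain ⟨Z, M, hZ⟩ := inst_shape hx t σ
  rw [hZ]
  exact fun h => dotshape_ne_ang (hat xhat M) h.symm

theorem dotshape_notin_instPT {Z M : Fml} :
    Fml.imp (ang xhat Z) (.imp M (ang xhat Z)) ∉ InstSet (PT xhat T) := by
  rintro ⟨F, hF, σ, hσ⟩
  obtain ⟨C, D, rfl, hC⟩ := axinst_antecedent hx hF
  obtain ⟨Z₁, M₁, hZ⟩ := hC σ
  simp only [Fml.subst] at hσ
  rw [hZ] at hσ
  injection hσ with h1 h2
  exact dotshape_ne_ang M₁ h1.symm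

theorem mem_instTset_of_dot {α : List (Fin m)} {P Q : Fml}
    (hX : dot xhat P Q ∈ InstSet (PT xhat T) ∪ InstSet (Tset xhat T α)) :
    ∃ (l r : ATree m) (τ : ℕ → Fml), TagProd T α (l.word ++ r.word) ∧
      P = Fml.subst τ (l.toFml xhat) ∧ Q = Fml.subst τ (r.toFml xhat) := by
  rcases hX with hX | hX
  · rw [dot_eq] at hX
    exact absurd hX (dotshape_notin_instPT hx)
  · obtain ⟨F, ⟨t, rfl, hreach⟩, τ, hτ⟩ := hX
    obtain ⟨l, r, rfl, hP, hQ⟩ := dot_inst hx hτ.symm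
    exact ⟨l, r, τ, by simpa [ATree.word] using hreach, hP, hQ⟩

theorem mem_instTset_of_tree {α : List (Fin m)} (t : ATree m) (σ : ℕ → Fml)
    (hX : Fml.subst σ (t.toFml xhat) ∈ InstSet (PT xhat T) ∪ InstSet (Tset xhat T α)) :
    ∃ (t' : ATree m) (τ : ℕ → Fml), TagProd T α t'.word ∧
      Fml.subst τ (t'.toFml xhat) = Fml.subst σ (t.toFml xhat) := by
  rcases hX with hX | hX
  · obtain ⟨Z, M, hZ⟩ := inst_shape hx t σ
    rw [hZ] at hX
    exact absurd hX (dotshape_notin_instPT hx)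
  · obtain ⟨F, ⟨t', rfl, hreach⟩, τ, hτ⟩ := hX
    exact ⟨t', τ, hreach, hτ⟩

theorem assoc_helperL {α : List (Fin m)} {P Q R : Fml}
    (hX : dot xhat P (dot xhat Q R) ∈
      InstSet (PT xhat T) ∪ InstSet (Tset xhat T α)) :
    dot xhat (dot xhat P Q) R ∈ InstSet (Tset xhat T α) := by
  obtain ⟨l, r, τ, hreach, hP, hQR⟩ := mem_instTset_of_dot hx hX
  obtain ⟨p, q, rfl, hQ, hR⟩ := dot_inst hx hQR
  refine ⟨_, ⟨ATree.node (ATree.node l p) q, rfl, ?_⟩, τ, ?_⟩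
  · have : (ATree.node (ATree.node l p) q).word (m := m) =
        l.word ++ ((ATree.node p q).word) := by
      simp [ATree.word, List.append_assoc]
    rw [this]
    exact hreach
  · show Fml.subst τ (dot xhat (dot xhat (l.toFml xhat) (p.toFml xhat)) (q.toFml xhat)) = _
    rw [subst_dot hx, subst_dot hx, ← hP, ← hQ, ← hR]

theorem assoc_helperR {α : List (Fin m)} {P Q R : Fml}
    (hX : dot xhat (dot xhat P Q) R ∈
      InstSet (PT xhat T) ∪ InstSet (Tset xhat T α)) :
    dot xhat P (dot xhat Q R) ∈ InstSet (Tset xhat T α) := by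
  obtain ⟨l, r, τ, hreach, hPQ, hR⟩ := mem_instTset_of_dot hx hX
  obtain ⟨p, q, rfl, hP, hQ⟩ := dot_inst hx hPQ
  refine ⟨_, ⟨ATree.node p (ATree.node q r), rfl, ?_⟩, τ, ?_⟩
  · have : (ATree.node p (ATree.node q r)).word (m := m) =
        (ATree.node p q).word ++ r.word := by
      simp [ATree.word, List.append_assoc]
    rw [this]
    exact hreach
  · show Fml.subst τ (dot xhat (p.toFml xhat) (dot xhat (q.toFml xhat) (r.toFml xhat))) = _
    rw [subst_dot hx, subst_dot hx, ← hP, ← hQ, ← hR]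

theorem closure {α : List (Fin m)} {X Y : Fml}
    (hX : X ∈ InstSet (PT xhat T) ∪ InstSet (Tset xhat T α))
    (hXY : Fml.imp X Y ∈ InstSet (PT xhat T) ∪ InstSet (Tset xhat T α)) :
    Y ∈ InstSet (PT xhat T) ∪ InstSet (Tset xhat T α) := by
  rcases hXY with hXY | hXY
  · -- the major premise is an instance of an axiom of `P_T`
    obtain ⟨F, hF, σ, hσ⟩ := hXY
    rcases hF with hT | hR
    · obtain ⟨i, α', A, B, hlen, ⟨tA, hwA, rfl⟩, ⟨tB, hwB, rfl⟩, hor⟩ := hT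
      rcases hor with rfl | rfl
      · -- axiom (T₁)
        have hσ' : Fml.imp (Fml.subst σ (dot xhat (tA.toFml xhat) Xv))
            (Fml.subst σ (dot xhat Xv (tB.toFml xhat))) = Fml.imp X Y := hσ
        rw [subst_dot hx, subst_dot hx, subst_Xv] at hσ'
        injection hσ' with hXe hYe
        rw [← hXe] at hX
        obtain ⟨l, r, τ, hreach, hP, hQ⟩ := mem_instTset_of_dot hx hX
        obtain ⟨hw, h0⟩ := treeinst_eq hx tA l σ τ hP
        have hstep : TagStep T (l.word ++ r.word) (r.word ++ T.W i) :=
          ⟨i, α', r.word, hlen, by rw [← hw, hwA]; simp, rfl⟩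
        refine Or.inr ⟨_, ⟨ATree.node r tB, rfl, ?_⟩, τ, ?_⟩
        · have : (ATree.node r tB).word (m := m) = r.word ++ T.W i := by
            simp [ATree.word, hwB]
          rw [this]
          exact hreach.tail hstep
        · show Fml.subst τ (dot xhat (r.toFml xhat) (tB.toFml xhat)) = Y
          rw [subst_dot hx, ← hQ, subst_toFml_fix hx h0.symm tB, ← hYe]
      · -- axiom (T₂)
        simp only [Fml.subst] at hσ
        injection hσ with hXe hYe
        rw [← hXe] at hX
        obtain ⟨t', τ, hreach, hτ⟩ := mem_instTset_of_tree hx tA σ hX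
        obtain ⟨hw, h0⟩ := treeinst_eq hx t' tA τ σ hτ
        have hstep : TagStep T t'.word (T.W i) :=
          ⟨i, α', [], hlen, by rw [hw, hwA]; simp, by simp⟩
        refine Or.inr ⟨_, ⟨tB, rfl, ?_⟩, σ, hYe⟩
        rw [hwB]
        exact hreach.tail hstep
    · -- axioms (R₁)–(R₄)
      simp only [Raxioms, Set.mem_insert_iff, Set.mem_singleton_iff] at hR
      rcases hR with rfl | rfl | rfl | rfl
      · have hσ' : Fml.imp (Fml.subst σ (dot xhat Xv (dot xhat Yv Zv)))
            (Fml.subst σ (dot xhat (dot xhat Xv Yv) Zv)) = Fml.imp X Y := hσ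
        rw [subst_dot hx, subst_dot hx, subst_dot hx, subst_dot hx,
          subst_Xv, subst_Yv, subst_Zv] at hσ'
        injection hσ' with hXe hYe
        rw [← hXe] at hX
        rw [← hYe]
        exact Or.inr (assoc_helperL hx hX)
      · have hσ' : Fml.imp (Fml.subst σ (dot xhat (dot xhat Xv Yv) Zv))
            (Fml.subst σ (dot xhat Xv (dot xhat Yv Zv))) = Fml.imp X Y := hσ
        rw [subst_dot hx, subst_dot hx, subst_dot hx, subst_dot hx,
          subst_Xv, subst_Yv, subst_Zv] at hσ'
        injection hσ' with hXe hYe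
        rw [← hXe] at hX
        rw [← hYe]
        exact Or.inr (assoc_helperR hx hX)
      · have hσ' : Fml.imp (Fml.subst σ (dot xhat (dot xhat Xv (dot xhat Yv Zv)) Uv))
            (Fml.subst σ (dot xhat (dot xhat (dot xhat Xv Yv) Zv) Uv)) = Fml.imp X Y := hσ
        simp only [subst_dot hx, subst_Xv, subst_Yv, subst_Zv, subst_Uv] at hσ'
        injection hσ' with hXe hYe
        rw [← hXe] at hX
        rw [← hYe]
        obtain ⟨l, u, τ, hreach, hPQR, hU⟩ := mem_instTset_of_dot hx hX
        obtain ⟨p, w, rfl, hP, hQR⟩ := dot_inst hx hPQR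
        obtain ⟨q, s, rfl, hQ, hR⟩ := dot_inst hx hQR
        refine Or.inr ⟨_, ⟨ATree.node (ATree.node (ATree.node p q) s) u, rfl, ?_⟩, τ, ?_⟩
        · have : (ATree.node (ATree.node (ATree.node p q) s) u).word (m := m) =
              (ATree.node p (ATree.node q s)).word ++ u.word := by
            simp [ATree.word, List.append_assoc]
          rw [this]
          exact hreach
        · show Fml.subst τ (dot xhat (dot xhat (dot xhat (p.toFml xhat) (q.toFml xhat))
              (s.toFml xhat)) (u.toFml xhat)) = _
          rw [subst_dot hx, subst_dot hx, subst_dot hx, ← hP, ← hQ, ← hR, ← hU]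
      · have hσ' : Fml.imp (Fml.subst σ (dot xhat (dot xhat (dot xhat Xv Yv) Zv) Uv))
            (Fml.subst σ (dot xhat (dot xhat Xv (dot xhat Yv Zv)) Uv)) = Fml.imp X Y := hσ
        simp only [subst_dot hx, subst_Xv, subst_Yv, subst_Zv, subst_Uv] at hσ'
        injection hσ' with hXe hYe
        rw [← hXe] at hX
        rw [← hYe]
        obtain ⟨l, u, τ, hreach, hPQR, hU⟩ := mem_instTset_of_dot hx hX
        obtain ⟨w, s, rfl, hPQ, hR⟩ := dot_inst hx hPQR
        obtain ⟨p, q, rfl, hP, hQ⟩ := dot_inst hx hPQ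
        refine Or.inr ⟨_, ⟨ATree.node (ATree.node p (ATree.node q s)) u, rfl, ?_⟩, τ, ?_⟩
        · have : (ATree.node (ATree.node p (ATree.node q s)) u).word (m := m) =
              (ATree.node (ATree.node p q) s).word ++ u.word := by
            simp [ATree.word, List.append_assoc]
          rw [this]
          exact hreach
        · show Fml.subst τ (dot xhat (dot xhat (p.toFml xhat) (dot xhat (q.toFml xhat)
              (s.toFml xhat))) (u.toFml xhat)) = _
          rw [subst_dot hx, subst_dot hx, subst_dot hx, ← hP, ← hQ, ← hR, ← hU]
  · -- the major premise is an instance of a formula of `T_α`: impossible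
    obtain ⟨F, ⟨t, rfl, hreach⟩, σ, hσ⟩ := hXY
    obtain ⟨Z, M, hZ⟩ := inst_shape hx t σ
    rw [hZ] at hσ
    injection hσ with hXe hYe
    exfalso
    rw [← hXe] at hX
    rcases hX with hX | hX
    · exact ang_notin_instPT hx hX
    · obtain ⟨F', ⟨t', rfl, _⟩, τ, hτ⟩ := hX
      exact treeinst_ne_ang hx t' τ hτ

/-- Derivability of formulas of `P_T ∪ ͞α` lands in `P_T* ∪ T_α*`. -/
theorem deriv_subset {α : List (Fin m)} {A : Fml}
    (h : Fml.Deriv (PT xhat T ∪ codeSet xhat α) A) :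
    A ∈ InstSet (PT xhat T) ∪ InstSet (Tset xhat T α) := by
  induction h with
  | ax hA =>
      rcases hA with hA | hA
      · exact Or.inl ⟨_, hA, Fml.var, subst_var _⟩
      · obtain ⟨t, hw, rfl⟩ := hA
        refine Or.inr ⟨_, ⟨t, rfl, ?_⟩, Fml.var, subst_var _⟩
        rw [hw]
        exact Relation.ReflTransGen.refl
  | mp h1 h2 ih1 ih2 => exact closure hx ih1 ih2
  | sub σ h ih =>
      rcases ih with ⟨F, hF, τ, rfl⟩ | ⟨F, hF, τ, rfl⟩
      · exact Or.inl ⟨F, hF, _, (subst_comp σ τ F).symm⟩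
      · exact Or.inr ⟨F, hF, _, (subst_comp σ τ F).symm⟩

theorem rot_deriv {P : Set Fml} (hP : Raxioms xhat ⊆ P) {s t : ATree m}
    (h : Rot s t) :
    Fml.Deriv P (.imp (s.toFml xhat) (t.toFml xhat)) := by
  cases h with
  | root1 x y z =>
      have hax : Fml.Deriv P (.imp (dot xhat Xv (dot xhat Yv Zv))
          (dot xhat (dot xhat Xv Yv) Zv)) :=
        Fml.Deriv.ax (hP (by simp [Raxioms]))
      have hs := Fml.Deriv.sub (fun n => if n = 1 then x.toFml xhat else
        if n = 2 then y.toFml xhat else if n = 3 then z.toFml xhat else .var n) hax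
      have heq : Fml.subst (fun n => if n = 1 then x.toFml xhat else
          if n = 2 then y.toFml xhat else if n = 3 then z.toFml xhat else .var n)
          (.imp (dot xhat Xv (dot xhat Yv Zv)) (dot xhat (dot xhat Xv Yv) Zv)) =
          .imp ((ATree.node x (ATree.node y z)).toFml xhat)
            ((ATree.node (ATree.node x y) z).toFml xhat) := by
        show Fml.imp (Fml.subst _ _) (Fml.subst _ _) = _
        simp only [subst_dot hx, subst_Xv, subst_Yv, subst_Zv]
        rfl
      rw [heq] at hs
      exact hs
  | root2 x y z =>
      have hax : Fml.Deriv P (.imp (dot xhat (dot xhat Xv Yv) Zv)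
          (dot xhat Xv (dot xhat Yv Zv))) :=
        Fml.Deriv.ax (hP (by simp [Raxioms]))
      have hs := Fml.Deriv.sub (fun n => if n = 1 then x.toFml xhat else
        if n = 2 then y.toFml xhat else if n = 3 then z.toFml xhat else .var n) hax
      have heq : Fml.subst (fun n => if n = 1 then x.toFml xhat else
          if n = 2 then y.toFml xhat else if n = 3 then z.toFml xhat else .var n)
          (.imp (dot xhat (dot xhat Xv Yv) Zv) (dot xhat Xv (dot xhat Yv Zv))) =
          .imp ((ATree.node (ATree.node x y) z).toFml xhat)
            ((ATree.node x (ATree.node y z)).toFml xhat) := by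
        show Fml.imp (Fml.subst _ _) (Fml.subst _ _) = _
        simp only [subst_dot hx, subst_Xv, subst_Yv, subst_Zv]
        rfl
      rw [heq] at hs
      exact hs
  | left1 x y z u =>
      have hax : Fml.Deriv P (.imp (dot xhat (dot xhat Xv (dot xhat Yv Zv)) Uv)
          (dot xhat (dot xhat (dot xhat Xv Yv) Zv) Uv)) :=
        Fml.Deriv.ax (hP (by simp [Raxioms]))
      have hs := Fml.Deriv.sub (fun n => if n = 1 then x.toFml xhat else
        if n = 2 then y.toFml xhat else if n = 3 then z.toFml xhat else
        if n = 4 then u.toFml xhat else .var n) hax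
      have heq : Fml.subst (fun n => if n = 1 then x.toFml xhat else
          if n = 2 then y.toFml xhat else if n = 3 then z.toFml xhat else
          if n = 4 then u.toFml xhat else .var n)
          (.imp (dot xhat (dot xhat Xv (dot xhat Yv Zv)) Uv)
            (dot xhat (dot xhat (dot xhat Xv Yv) Zv) Uv)) =
          .imp ((ATree.node (ATree.node x (ATree.node y z)) u).toFml xhat)
            ((ATree.node (ATree.node (ATree.node x y) z) u).toFml xhat) := by
        show Fml.imp (Fml.subst _ _) (Fml.subst _ _) = _
        simp only [subst_dot hx, subst_Xv, subst_Yv, subst_Zv, subst_Uv]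
        rfl
      rw [heq] at hs
      exact hs
  | left2 x y z u =>
      have hax : Fml.Deriv P (.imp (dot xhat (dot xhat (dot xhat Xv Yv) Zv) Uv)
          (dot xhat (dot xhat Xv (dot xhat Yv Zv)) Uv)) :=
        Fml.Deriv.ax (hP (by simp [Raxioms]))
      have hs := Fml.Deriv.sub (fun n => if n = 1 then x.toFml xhat else
        if n = 2 then y.toFml xhat else if n = 3 then z.toFml xhat else
        if n = 4 then u.toFml xhat else .var n) hax
      have heq : Fml.subst (fun n => if n = 1 then x.toFml xhat else
          if n = 2 then y.toFml xhat else if n = 3 then z.toFml xhat else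
          if n = 4 then u.toFml xhat else .var n)
          (.imp (dot xhat (dot xhat (dot xhat Xv Yv) Zv) Uv)
            (dot xhat (dot xhat Xv (dot xhat Yv Zv)) Uv)) =
          .imp ((ATree.node (ATree.node (ATree.node x y) z) u).toFml xhat)
            ((ATree.node (ATree.node x (ATree.node y z)) u).toFml xhat) := by
        show Fml.imp (Fml.subst _ _) (Fml.subst _ _) = _
        simp only [subst_dot hx, subst_Xv, subst_Yv, subst_Zv, subst_Uv]
        rfl
      rw [heq] at hs
      exact hs

theorem rotstar_deriv {P : Set Fml} (hP : Raxioms xhat ⊆ P) {s t : ATree m}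
    (h : Relation.ReflTransGen (Rot (m := m)) s t)
    (hd : Fml.Deriv P (s.toFml xhat)) : Fml.Deriv P (t.toFml xhat) := by
  induction h with
  | refl => exact hd
  | tail _ hstep ih => exact Fml.Deriv.mp ih (rot_deriv hx hP hstep)

theorem derive_reach {α : List (Fin m)} (hW : ∀ i, T.W i ≠ []) :
    ∀ {ζ : List (Fin m)}, TagProd T α ζ → ∀ t : ATree m, t.word = ζ →
      Fml.Deriv (PT xhat T ∪ codeSet xhat α) (t.toFml xhat) := by
  intro ζ h
  induction h with
  | refl => intro t ht; exact Fml.Deriv.ax (Or.inr ⟨t, ht, rfl⟩)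
  | tail hprod hstep ih =>
      obtain ⟨i, β, γ, hlen, rfl, rfl⟩ := hstep
      intro t ht
      cases γ with
      | nil =>
          have hA := ih (rcomb i β) (by simp [rcomb_word])
          have hax : Fml.imp ((rcomb i β).toFml xhat) (t.toFml xhat) ∈ Taxioms xhat T :=
            ⟨i, β, _, _, hlen, ⟨rcomb i β, by simp [rcomb_word], rfl⟩,
              ⟨t, by simpa using ht, rfl⟩, Or.inr rfl⟩
          exact Fml.Deriv.mp hA (Fml.Deriv.ax (Set.mem_union_left _ (Set.mem_union_left _ hax)))
      | cons g γ' =>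
          obtain ⟨w0, w', hWi⟩ : ∃ w0 w', T.W i = w0 :: w' := by
            cases hWi : T.W i with
            | nil => exact absurd hWi (hW i)
            | cons w0 w' => exact ⟨w0, w', rfl⟩
          set A := rcomb i β with hAdef
          set G := rcomb g γ' with hGdef
          set B := rcomb w0 w' with hBdef
          have hs := ih (ATree.node A G) (by simp [ATree.word, hAdef, hGdef, rcomb_word])
          have hax : Fml.imp (dot xhat (A.toFml xhat) Xv) (dot xhat Xv (B.toFml xhat)) ∈
              Taxioms xhat T :=
            ⟨i, β, _, _, hlen, ⟨A, by simp [hAdef, rcomb_word], rfl⟩,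
              ⟨B, by rw [hBdef, rcomb_word, hWi], rfl⟩, Or.inl rfl⟩
          have hsub : Fml.subst (fun n => if n = 1 then G.toFml xhat else .var n)
              (.imp (dot xhat (A.toFml xhat) Xv) (dot xhat Xv (B.toFml xhat))) =
              .imp (dot xhat (A.toFml xhat) (G.toFml xhat))
                (dot xhat (G.toFml xhat) (B.toFml xhat)) := by
            show Fml.imp (Fml.subst _ _) (Fml.subst _ _) = _
            rw [subst_dot hx, subst_dot hx, subst_Xv]
            rw [subst_toFml_id hx (σ := fun n => if n = 1 then G.toFml xhat else .var n) rfl A,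
              subst_toFml_id hx (σ := fun n => if n = 1 then G.toFml xhat else .var n) rfl B]
            norm_num
          have himp : Fml.Deriv (PT xhat T ∪ codeSet xhat α)
              (.imp (dot xhat (A.toFml xhat) (G.toFml xhat))
                (dot xhat (G.toFml xhat) (B.toFml xhat))) := by
            rw [← hsub]
            exact Fml.Deriv.sub _
              (Fml.Deriv.ax (Set.mem_union_left _ (Set.mem_union_left _ hax)))
          have hGB : Fml.Deriv (PT xhat T ∪ codeSet xhat α)
              ((ATree.node G B).toFml xhat) := Fml.Deriv.mp hs himp
          have hword : (ATree.node G B).word = t.word := by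
            simp [ATree.word, hAdef, hGdef, hBdef, rcomb_word, ← hWi, ht]
          exact rotstar_deriv hx (fun F hF => Or.inl (Or.inr hF))
            (rot_rebracket _ _ hword) hGB

end Calc

end Hat

end Aux

/-- For every nonempty word `α` over `𝒜`, the set of formulas
derivable from `P_T ∪ ͞α` equals `P_T* ∪ T_α*`. -/
theorem deriv_PT_code_eq (xhat : Fml) (hx : xhat.fvars = {0})
    (m : ℕ) (T : TagSystem m) (hW : ∀ i, T.W i ≠ [])
    (α : List (Fin m)) (hα : α ≠ []) :
    { A : Fml | Fml.Deriv (PT xhat T ∪ codeSet xhat α) A } =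
      InstSet (PT xhat T) ∪ InstSet (Tset xhat T α) := by
  ext A
  constructor
  · intro h
    exact Aux.deriv_subset hx h
  · intro h
    rcases h with ⟨F, hF, σ, rfl⟩ | ⟨F, ⟨t, rfl, hreach⟩, σ, rfl⟩
    · exact Fml.Deriv.sub σ (Fml.Deriv.ax (Set.mem_union_left _ hF))
    · exact Fml.Deriv.sub σ (Aux.derive_reach hx hW hreach t rfl)

end PC
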